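/- With δ = √(3/8) and lepton eigenvalues (a,b,c) = (1/3−δ, 1/3, 1/3+δ), the endpoint tilt G = |c/a| = (1/3+δ)/(δ−1/3) satisfies G = 3.3891… and the product ((1+δ)/(1−δ))·G = 14.097486… to within 10⁻⁵. Moreover the down endpoint contrast equals the lepton last-rung ratio: (1+δ)/(1−δ) is the common value of √(m_s/m_d) and √(m_τ/m_μ). -/

import Mathlib

/-!
Since `δ² = 3/8`, both `(1 + δ)(1/3 + δ)` and `(1 - δ)(δ - 1/3)` are affine in `δ`, namely
`17/24 ± 4δ/3`, so the product of the down contrast and the lepton tilt is the Möbius value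
`(32δ + 17)/(32δ - 17)`. Every numerical claim then becomes a linear inequality in `δ`, settled
by the enclosure `0.61237243 < √(3/8) < 0.61237244`.
-/

lemma lt_sqrt_three_eighths : (0.61237243 : ℝ) < √(3 / 8) :=
  Real.lt_sqrt_of_sq_lt (by norm_num)

lemma sqrt_three_eighths_lt : √(3 / 8) < (0.61237244 : ℝ) :=
  (Real.sqrt_lt' (by norm_num)).2 (by norm_num)

lemma tilt_bounds {δ : ℝ} (hlo : 0.61237243 < δ) (hhi : δ < 0.61237244) :
    3.3891 < (1 / 3 + δ) / (δ - 1 / 3) ∧ (1 / 3 + δ) / (δ - 1 / 3) < 3.3892 := by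
  have hpos : 0 < δ - 1 / 3 := by linarith
  rw [lt_div_iff₀ hpos, div_lt_iff₀ hpos]
  constructor <;> linarith

lemma contrast_mul_tilt_eq {δ : ℝ} (hδ : δ ^ 2 = 3 / 8) :
    (1 + δ) / (1 - δ) * ((1 / 3 + δ) / (δ - 1 / 3)) = (32 * δ + 17) / (32 * δ - 17) := by
  have h₁ : 1 - δ ≠ 0 := fun h => by nlinarith
  have h₂ : δ - 1 / 3 ≠ 0 := fun h => by nlinarith
  have h₃ : 32 * δ - 17 ≠ 0 := fun h => by nlinarith
  rw [div_mul_div_comm, div_eq_div_iff (mul_ne_zero h₁ h₂) h₃]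
  linear_combination 64 * δ * hδ

lemma contrast_mul_tilt_approx {δ : ℝ} (hlo : 0.61237243 < δ) (hhi : δ < 0.61237244) :
    |(32 * δ + 17) / (32 * δ - 17) - 14.097486| < 1e-5 := by
  have hpos : 0 < 32 * δ - 17 := by linarith
  rw [abs_sub_lt_iff, sub_lt_iff_lt_add, sub_lt_comm, div_lt_iff₀ hpos, lt_div_iff₀ hpos]
  constructor <;> linarith

theorem stmt_19_general (δ a c G : ℝ)
    (hδ : δ = Real.sqrt (3 / 8))
    (ha : a = 1 / 3 - δ) (hc : c = 1 / 3 + δ)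
    (hG : G = (1 / 3 + δ) / (δ - 1 / 3)) :
    G = |c / a| ∧
    (3.3891 < G ∧ G < 3.3892) ∧
    |((1 + δ) / (1 - δ)) * G - 14.097486| < 1e-5 ∧
    (∀ ad cd sqrt_ms_md sqrt_mτ_mμ : ℝ,
      ad = 1 - δ → cd = 1 + δ →
      sqrt_ms_md = cd / ad → sqrt_mτ_mμ = (1 + δ) / (1 - δ) →
      sqrt_ms_md = sqrt_mτ_mμ ∧ sqrt_ms_md = (1 + δ) / (1 - δ)) := by
  have hlo : 0.61237243 < δ := hδ ▸ lt_sqrt_three_eighths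
  have hhi : δ < 0.61237244 := hδ ▸ sqrt_three_eighths_lt
  have hδ_sq : δ ^ 2 = 3 / 8 := by rw [hδ, Real.sq_sqrt (by norm_num)]
  subst ha hc hG
  refine ⟨?_, tilt_bounds hlo hhi, ?_, ?_⟩
  · rw [abs_div, abs_of_pos (by linarith), abs_of_neg (by linarith), neg_sub]
  · rw [contrast_mul_tilt_eq hδ_sq]
    exact contrast_mul_tilt_approx hlo hhi
  · rintro ad cd s t rfl rfl rfl rfl
    exact ⟨rfl, rfl⟩

/-- With `δ = √(3/8)` and lepton eigenvalues `(a,b,c) = (1/3-δ, 1/3, 1/3+δ)`,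
the endpoint tilt `G = |c/a| = (1/3+δ)/(δ-1/3)` satisfies `G = 3.3891…`, the
product `((1+δ)/(1-δ))·G = 14.097486…` to within `10⁻⁵`, and the down endpoint
contrast equals the lepton last-rung ratio: `(1+δ)/(1-δ)` is the common value
of `√(m_s/m_d) = c_d/a_d` (down eigenvalues `a_d = 1-δ`, `c_d = 1+δ`) and
`√(m_τ/m_μ)`. -/
theorem stmt_19 (δ a b c G : ℝ)
    (hδ : δ = Real.sqrt (3 / 8))
    (ha : a = 1 / 3 - δ) (hb : b = 1 / 3) (hc : c = 1 / 3 + δ)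
    (hG : G = (1 / 3 + δ) / (δ - 1 / 3)) :
    G = |c / a| ∧
    (3.3891 < G ∧ G < 3.3892) ∧
    |((1 + δ) / (1 - δ)) * G - 14.097486| < 1e-5 ∧
    (∀ ad cd sqrt_ms_md sqrt_mτ_mμ : ℝ,
      ad = 1 - δ → cd = 1 + δ →
      sqrt_ms_md = cd / ad → sqrt_mτ_mμ = (1 + δ) / (1 - δ) →
      sqrt_ms_md = sqrt_mτ_mμ ∧ sqrt_ms_md = (1 + δ) / (1 - δ)) :=
  stmt_19_general δ a c G hδ ha hc hG
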